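/- Let R ≅ R₁ × ... × Rₙ (n ≥ 3) be a finite commutative principal ring with each Rᵢ local with radical Jᵢ of nilpotency order nᵢ, and let β be the number of indices i with Rᵢ a field. Then (Σᵢ nᵢ) - n + ε ≤ dim_M(AG(R)) ≤ Σᵢ nᵢ, where ε = 0 if β = 0 and ε = ⌈log₂ β⌉ if β ≥ 1. -/

import Mathlib

open Ideal IsLocalRing

/-- A nonzero ideal with nonzero annihilator: a vertex of the annihilating-ideal graph. -/
def AGIsVertex {R : Type*} [CommRing R] (I : Ideal R) : Prop :=
  I ≠ ⊥ ∧ ∃ K : Ideal R, K ≠ ⊥ ∧ I * K = ⊥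

/-- The vertex set of the annihilating-ideal graph. -/
def AGVertex (R : Type*) [CommRing R] : Type _ := {I : Ideal R // AGIsVertex I}

/-- The annihilating-ideal graph of a commutative ring. -/
def AG (R : Type*) [CommRing R] : SimpleGraph (AGVertex R) where
  Adj I J := I ≠ J ∧ I.1 * J.1 = ⊥
  symm := by
    constructor
    rintro a b ⟨h1, h2⟩
    exact ⟨h1.symm, by rwa [mul_comm] at h2⟩
  loopless := by constructor; rintro a ⟨h, -⟩; exact h rfl

/-- A resolving set for a graph. -/
def IsResolving {V : Type*} (G : SimpleGraph V) (W : Set V) : Prop :=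
  ∀ u v : V, (∀ w ∈ W, G.dist u w = G.dist v w) → u = v

/-- The metric dimension of a graph. -/
noncomputable def metricDim {V : Type*} (G : SimpleGraph V) : ℕ :=
  sInf {n | ∃ W : Set V, IsResolving G W ∧ W.Finite ∧ W.ncard = n}

/-- The ideal of a product ring given by a family of ideals of the factors. -/
def piIdeal {ι : Type*} {R : ι → Type*} [∀ i, CommRing (R i)]
    (I : ∀ i, Ideal (R i)) : Ideal (∀ i, R i) where
  carrier := {x | ∀ i, x i ∈ I i}
  add_mem' h1 h2 i := (I _).add_mem (h1 i) (h2 i)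
  zero_mem' i := (I i).zero_mem
  smul_mem' c x hx := by
    intro i
    simpa using (I i).mul_mem_left (c i) (hx i)

/-- The family of ideals with the ideal `I` at index `s` and zero elsewhere. -/
def singleIdeal {ι : Type*} [DecidableEq ι] {R : ι → Type*} [∀ i, CommRing (R i)]
    (s : ι) (I : Ideal (R s)) : ∀ i, Ideal (R i) :=
  fun i => if h : i = s then cast (by rw [h]) I else ⊥

/-- The family of ideals with the ideal `I` at index `s` and everything elsewhere. -/
def coSingleIdeal {ι : Type*} [DecidableEq ι] {R : ι → Type*} [∀ i, CommRing (R i)]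
    (s : ι) (I : Ideal (R s)) : ∀ i, Ideal (R i) :=
  fun i => if h : i = s then cast (by rw [h]) I else ⊤


set_option linter.unusedSectionVars false
set_option linter.unusedVariables false
set_option maxHeartbeats 1000000


section Chain
variable {A : Type*} [CommRing A] [IsLocalRing A] [IsPrincipalIdealRing A] {ν : ℕ}

set_option linter.unusedSectionVars false

lemma chain_nu_pos (h1 : maximalIdeal A ^ ν = ⊥) (h2 : maximalIdeal A ^ (ν-1) ≠ ⊥) : 1 ≤ ν := by
  rcases Nat.eq_zero_or_pos ν with h | h
  · exfalso; subst h; simp only [Nat.zero_sub, pow_zero] at h1 h2; exact h2 h1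
  · exact h

lemma chain_pow_bot_iff (h1 : maximalIdeal A ^ ν = ⊥) (h2 : maximalIdeal A ^ (ν-1) ≠ ⊥)
    (a : ℕ) : maximalIdeal A ^ a = ⊥ ↔ ν ≤ a := by
  constructor
  · intro h
    by_contra hlt
    push_neg at hlt
    exact h2 (le_bot_iff.mp (h ▸ Ideal.pow_le_pow_right (by omega)))
  · intro h
    exact le_bot_iff.mp (h1 ▸ Ideal.pow_le_pow_right h)

lemma chain_pow_inj (h1 : maximalIdeal A ^ ν = ⊥) (h2 : maximalIdeal A ^ (ν-1) ≠ ⊥)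
    {a b : ℕ} (ha : a ≤ ν) (hb : b ≤ ν) (h : maximalIdeal A ^ a = maximalIdeal A ^ b) :
    a = b := by
  have key : ∀ c d : ℕ, c < d → d ≤ ν → maximalIdeal A ^ c ≠ maximalIdeal A ^ d := by
    intro c d hcd hdν heq
    have hstep : maximalIdeal A ^ (c+1) = maximalIdeal A ^ c := by
      refine le_antisymm (Ideal.pow_le_pow_right (by omega)) ?_
      calc maximalIdeal A ^ c = maximalIdeal A ^ d := heq
        _ ≤ maximalIdeal A ^ (c+1) := Ideal.pow_le_pow_right (by omega)
    have hall : ∀ k : ℕ, maximalIdeal A ^ (c+k) = maximalIdeal A ^ c := by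
      intro k
      induction k with
      | zero => rfl
      | succ n ih =>
        calc maximalIdeal A ^ (c+(n+1)) = maximalIdeal A ^ (c+n) * maximalIdeal A := by
              rw [← pow_succ]; ring_nf
          _ = maximalIdeal A ^ c * maximalIdeal A := by rw [ih]
          _ = maximalIdeal A ^ (c+1) := (pow_succ _ _).symm
          _ = maximalIdeal A ^ c := hstep
    have hbot : maximalIdeal A ^ c = ⊥ := by
      have := hall (ν - c)
      rw [show c + (ν - c) = ν by omega, h1] at this
      exact this.symm
    rw [chain_pow_bot_iff h1 h2] at hbot
    omega
  rcases lt_trichotomy a b with hl | he | hl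
  · exact absurd h (key a b hl hb)
  · exact he
  · exact absurd h.symm (key b a hl ha)

lemma chain_ideal_eq_pow (h1 : maximalIdeal A ^ ν = ⊥) (h2 : maximalIdeal A ^ (ν-1) ≠ ⊥)
    (I : Ideal A) : ∃ k ≤ ν, I = maximalIdeal A ^ k := by
  rcases eq_or_ne I ⊥ with hI | hI
  · exact ⟨ν, le_rfl, by rw [hI, h1]⟩
  obtain ⟨g, hg⟩ := (IsPrincipalIdealRing.principal I)
  have hg0 : g ≠ 0 := by
    rintro rfl
    rw [hg] at hI; simp at hI
  set P : ℕ → Prop := fun k => g ∈ maximalIdeal A ^ k with hP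
  classical
  set k := Nat.findGreatest P ν with hk
  have hgk : P k := Nat.findGreatest_spec (Nat.zero_le ν) (by simp [hP])
  rw [hP] at hgk
  have hkν : k ≤ ν := Nat.findGreatest_le ν
  have hkne : k ≠ ν := by
    intro hkk
    apply hg0
    have : g ∈ (⊥ : Ideal A) := by rw [← h1, ← hkk]; exact hgk
    simpa using this
  have hgk1 : ¬ P (k+1) := Nat.findGreatest_is_greatest (n := ν) (by omega) (by omega)
  rw [hP] at hgk1
  -- maximal ideal is principal
  obtain ⟨π, hπ⟩ := (IsPrincipalIdealRing.principal (maximalIdeal A))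
  have hmk : maximalIdeal A ^ k = Ideal.span {π ^ k} := by
    rw [hπ, Ideal.submodule_span_eq, Ideal.span_singleton_pow]
  have hmk1 : maximalIdeal A ^ (k+1) = Ideal.span {π ^ (k+1)} := by
    rw [hπ, Ideal.submodule_span_eq, Ideal.span_singleton_pow]
  rw [hmk, Ideal.mem_span_singleton'] at hgk
  obtain ⟨u, hu⟩ := hgk
  have hunit : IsUnit u := by
    by_contra hnu
    apply hgk1
    have humem : u ∈ maximalIdeal A := by
      rw [IsLocalRing.mem_maximalIdeal]; exact hnu
    rw [hπ, Ideal.submodule_span_eq, Ideal.mem_span_singleton'] at humem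
    obtain ⟨v, hv⟩ := humem
    rw [hmk1, Ideal.mem_span_singleton']
    exact ⟨v, by rw [← hu, ← hv]; ring⟩
  refine ⟨k, hkν, ?_⟩
  rw [hg, hmk, ← hu, Ideal.submodule_span_eq]
  rcases hunit with ⟨u', rfl⟩
  exact Ideal.span_singleton_mul_left_unit u'.isUnit _

lemma chain_isField_iff (h1 : maximalIdeal A ^ ν = ⊥) (h2 : maximalIdeal A ^ (ν-1) ≠ ⊥) :
    IsField A ↔ ν = 1 := by
  rw [IsLocalRing.isField_iff_maximalIdeal_eq]
  constructor
  · intro h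
    have : maximalIdeal A ^ 1 = ⊥ := by simpa using h
    rw [chain_pow_bot_iff h1 h2] at this
    have := chain_nu_pos h1 h2
    omega
  · intro h
    subst h
    simpa using h1

end Chain

section Prod
variable {ι : Type*} [Fintype ι] [DecidableEq ι] {R : ι → Type*} [∀ i, CommRing (R i)]

lemma mem_piIdeal {I : ∀ i, Ideal (R i)} {x : ∀ i, R i} :
    x ∈ piIdeal I ↔ ∀ i, x i ∈ I i := Iff.rfl

lemma single_mem_piIdeal {I : ∀ i, Ideal (R i)} {i : ι} {x : R i} (h : x ∈ I i) :
    Pi.single i x ∈ piIdeal I := by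
  intro j
  rcases eq_or_ne j i with rfl | hne
  · simpa using h
  · simp [Pi.single_eq_of_ne hne]

lemma piIdeal_le_piIdeal_iff {I J : ∀ i, Ideal (R i)} :
    piIdeal I ≤ piIdeal J ↔ ∀ i, I i ≤ J i := by
  constructor
  · intro h i x hx
    have := h (single_mem_piIdeal (I := I) hx) i
    simpa using this
  · intro h x hx i
    exact h i (hx i)

lemma piIdeal_inj {I J : ∀ i, Ideal (R i)} :
    piIdeal I = piIdeal J ↔ ∀ i, I i = J i := by
  constructor
  · intro h i
    exact le_antisymm (piIdeal_le_piIdeal_iff.mp h.le i) (piIdeal_le_piIdeal_iff.mp h.ge i)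
  · intro h
    have : I = J := funext h
    rw [this]

lemma piIdeal_bot : piIdeal (fun i => (⊥ : Ideal (R i))) = ⊥ := by
  ext x
  simp only [mem_piIdeal, Ideal.mem_bot]
  constructor
  · intro h; funext i; exact h i
  · intro h i; rw [h]; rfl

lemma piIdeal_top : piIdeal (fun i => (⊤ : Ideal (R i))) = ⊤ := by
  ext x; simp [mem_piIdeal]

lemma ideal_eq_piIdeal (I : Ideal (∀ i, R i)) :
    I = piIdeal (fun i => I.map (Pi.evalRingHom R i)) := by
  apply le_antisymm
  · intro x hx i
    exact Ideal.mem_map_of_mem _ hx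
  · intro x hx
    have hx' : ∀ i, ∃ a ∈ I, a i = x i := by
      intro i
      have hsurj : Function.Surjective (Pi.evalRingHom R i) := by
        intro y
        exact ⟨Pi.single i y, Pi.single_eq_same i y⟩
      have := hx i
      rw [Ideal.mem_map_iff_of_surjective _ hsurj] at this
      exact this
    choose a ha hax using hx'
    have hxsum : x = ∑ j, Pi.single j (x j) := by
      rw [Finset.univ_sum_single]
    rw [hxsum]
    apply Ideal.sum_mem
    intro j _
    have : Pi.single j (x j) = Pi.single j (1 : R j) * a j := by
      funext l
      rcases eq_or_ne l j with rfl | hne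
      · simp [hax]
      · simp [Pi.single_eq_of_ne hne]
    rw [this]
    exact I.mul_mem_left _ (ha j)

lemma piIdeal_mul_eq_bot_iff {I J : ∀ i, Ideal (R i)} :
    piIdeal I * piIdeal J = ⊥ ↔ ∀ i, I i * J i = ⊥ := by
  constructor
  · intro h i
    rw [← le_bot_iff, Ideal.mul_le]
    intro r hr s hs
    have hmem : Pi.single i r * Pi.single i s ∈ (⊥ : Ideal (∀ i, R i)) := by
      rw [← h]
      exact Ideal.mul_mem_mul (single_mem_piIdeal hr) (single_mem_piIdeal hs)
    rw [Ideal.mem_bot] at hmem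
    have := congrFun hmem i
    simp only [Pi.mul_apply, Pi.single_eq_same, Pi.zero_apply] at this
    rw [Ideal.mem_bot]
    exact this
  · intro h
    rw [← le_bot_iff, Ideal.mul_le]
    intro r hr s hs
    rw [Ideal.mem_bot]
    funext i
    have : r i * s i ∈ I i * J i := Ideal.mul_mem_mul (hr i) (hs i)
    rw [h i, Ideal.mem_bot] at this
    simpa using this

end Prod

section Tup
variable {ι : Type*} [Fintype ι] [DecidableEq ι] {R : ι → Type*} [∀ i, CommRing (R i)]
  [∀ i, IsLocalRing (R i)] [∀ i, IsPrincipalIdealRing (R i)] {ν : ι → ℕ}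

variable (R) in
def tup (e : ι → ℕ) : Ideal (∀ i, R i) := piIdeal (fun i => maximalIdeal (R i) ^ e i)

variable (h1 : ∀ i, maximalIdeal (R i) ^ ν i = ⊥)
  (h2 : ∀ i, maximalIdeal (R i) ^ (ν i - 1) ≠ ⊥)
include h1 h2

lemma tup_inj {e e' : ι → ℕ} (he : ∀ i, e i ≤ ν i) (he' : ∀ i, e' i ≤ ν i) :
    tup R e = tup R e' ↔ e = e' := by
  rw [tup, tup, piIdeal_inj]
  constructor
  · intro h
    funext i
    exact chain_pow_inj (h1 i) (h2 i) (he i) (he' i) (h i)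
  · intro h i
    rw [h]

lemma exists_tup (I : Ideal (∀ i, R i)) : ∃ e : ι → ℕ, (∀ i, e i ≤ ν i) ∧ I = tup R e := by
  have := ideal_eq_piIdeal I
  have hch : ∀ i, ∃ k ≤ ν i, I.map (Pi.evalRingHom R i) = maximalIdeal (R i) ^ k := by
    intro i
    exact chain_ideal_eq_pow (h1 i) (h2 i) _
  choose e he hei using hch
  refine ⟨e, he, ?_⟩
  rw [tup, this]
  congr 1
  funext i
  exact hei i

lemma tup_mul_bot (e e' : ι → ℕ) :
    tup R e * tup R e' = ⊥ ↔ ∀ i, ν i ≤ e i + e' i := by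
  rw [tup, tup, piIdeal_mul_eq_bot_iff]
  apply forall_congr'
  intro i
  rw [← pow_add, chain_pow_bot_iff (h1 i) (h2 i)]

lemma tup_nu_eq_bot : tup R ν = ⊥ := by
  rw [tup, ← piIdeal_bot]
  congr 1
  funext i
  exact h1 i

lemma tup_eq_bot {e : ι → ℕ} (he : ∀ i, e i ≤ ν i) : tup R e = ⊥ ↔ e = ν := by
  rw [← tup_nu_eq_bot h1 h2]
  exact tup_inj h1 h2 he (fun i => le_rfl)

omit h1 h2 in
lemma tup_zero_eq_top : tup R (fun _ => 0) = ⊤ := by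
  rw [tup, ← piIdeal_top]
  congr 1
  funext i
  rw [pow_zero, Ideal.one_eq_top]

lemma tup_vertex {e : ι → ℕ} (he : ∀ i, e i ≤ ν i) :
    AGIsVertex (tup R e) ↔ (∃ i, 1 ≤ e i) ∧ (∃ i, e i < ν i) := by
  constructor
  · rintro ⟨hne, K, hK0, hKmul⟩
    constructor
    · by_contra h
      push_neg at h
      have he0 : e = fun _ => 0 := by funext i; exact Nat.lt_one_iff.mp (h i)
      rw [he0, tup_zero_eq_top, top_mul] at hKmul
      exact hK0 hKmul
    · by_contra h
      push_neg at h
      apply hne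
      rw [tup_eq_bot h1 h2 he]
      funext i
      exact le_antisymm (he i) (h i)
  · rintro ⟨⟨i0, hi0⟩, ⟨i1, hi1⟩⟩
    refine ⟨?_, tup R (fun i => ν i - e i), ?_, ?_⟩
    · rw [ne_eq, tup_eq_bot h1 h2 he]
      intro h
      rw [h] at hi1
      omega
    · rw [ne_eq, tup_eq_bot h1 h2 (fun i => Nat.sub_le _ _)]
      intro h
      have := congrFun h i0
      have := he i0
      have := chain_nu_pos (h1 i0) (h2 i0)
      omega
    · rw [tup_mul_bot h1 h2]
      intro i
      have := he i
      omega

variable [∀ i, Finite (R i)]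

noncomputable def expo (v : AGVertex (∀ i, R i)) : ι → ℕ :=
  (exists_tup h1 h2 v.1).choose

lemma expo_le (v : AGVertex (∀ i, R i)) : ∀ i, expo h1 h2 v i ≤ ν i :=
  (exists_tup h1 h2 v.1).choose_spec.1

lemma tup_expo (v : AGVertex (∀ i, R i)) : tup R (expo h1 h2 v) = v.1 :=
  (exists_tup h1 h2 v.1).choose_spec.2.symm

lemma expo_pos (v : AGVertex (∀ i, R i)) : ∃ i, 1 ≤ expo h1 h2 v i := by
  have := v.2
  rw [← tup_expo h1 h2 v, tup_vertex h1 h2 (expo_le h1 h2 v)] at this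
  exact this.1

lemma expo_lt (v : AGVertex (∀ i, R i)) : ∃ i, expo h1 h2 v i < ν i := by
  have := v.2
  rw [← tup_expo h1 h2 v, tup_vertex h1 h2 (expo_le h1 h2 v)] at this
  exact this.2

lemma vx_eq_iff (u v : AGVertex (∀ i, R i)) : u = v ↔ expo h1 h2 u = expo h1 h2 v := by
  constructor
  · rintro rfl; rfl
  · intro h
    have : tup R (expo h1 h2 u) = tup R (expo h1 h2 v) := by rw [h]
    rw [tup_expo, tup_expo] at this
    exact Subtype.ext this

lemma adj_iff (u v : AGVertex (∀ i, R i)) :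
    (AG (∀ i, R i)).Adj u v ↔
      expo h1 h2 u ≠ expo h1 h2 v ∧ ∀ i, ν i ≤ expo h1 h2 u i + expo h1 h2 v i := by
  show (u ≠ v ∧ u.1 * v.1 = ⊥) ↔ _
  rw [← tup_expo h1 h2 u, ← tup_expo h1 h2 v, tup_mul_bot h1 h2,
    ne_eq, vx_eq_iff h1 h2]

noncomputable def mkV (e : ι → ℕ) (he : ∀ i, e i ≤ ν i) (hp : ∃ i, 1 ≤ e i)
    (hl : ∃ i, e i < ν i) : AGVertex (∀ i, R i) :=
  ⟨tup R e, (tup_vertex h1 h2 he).mpr ⟨hp, hl⟩⟩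

lemma expo_mkV (e : ι → ℕ) (he : ∀ i, e i ≤ ν i) (hp : ∃ i, 1 ≤ e i)
    (hl : ∃ i, e i < ν i) : expo h1 h2 (mkV h1 h2 e he hp hl) = e := by
  have : tup R (expo h1 h2 (mkV h1 h2 e he hp hl)) = tup R e :=
    tup_expo h1 h2 (mkV h1 h2 e he hp hl)
  rwa [tup_inj h1 h2 (expo_le h1 h2 _) he] at this


-- ===== graph layer (still inside section Tup) =====
variable [∀ i, Finite (R i)]

omit h1 h2 in
lemma exists_third (hn : 3 ≤ Fintype.card ι) (i j : ι) : ∃ l, l ≠ i ∧ l ≠ j := by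
  by_contra hcon
  push_neg at hcon
  have hsub : (Finset.univ : Finset ι) ⊆ {i, j} := by
    intro l _
    rcases Classical.em (l = i) with rfl | hne
    · simp
    · simp [hcon l hne]
  have := Finset.card_le_card hsub
  have h2' : ({i, j} : Finset ι).card ≤ 2 := Finset.card_insert_le _ _ |>.trans (by simp)
  rw [Finset.card_univ] at this
  omega

noncomputable def PV (hn : 3 ≤ Fintype.card ι) (i : ι) (k : ℕ) : AGVertex (∀ i, R i) :=
  mkV h1 h2 (Pi.single i (max 1 (min k (ν i))))
    (by
      intro j
      rcases eq_or_ne j i with rfl | hne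
      · have := chain_nu_pos (h1 j) (h2 j); simp; omega
      · simp [Pi.single_eq_of_ne hne])
    ⟨i, by simp⟩
    (by
      obtain ⟨l, hl, -⟩ := exists_third hn i i
      refine ⟨l, ?_⟩
      rw [Pi.single_eq_of_ne hl]
      exact chain_nu_pos (h1 l) (h2 l))

noncomputable def QV (hn : 3 ≤ Fintype.card ι) (i : ι) (t : ℕ) : AGVertex (∀ i, R i) :=
  mkV h1 h2 (Function.update ν i (min t (ν i - 1)))
    (by
      intro j
      rcases eq_or_ne j i with rfl | hne
      · rw [Function.update_self]; omega
      · simp [Function.update_of_ne hne])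
    (by
      obtain ⟨l, hl, -⟩ := exists_third hn i i
      refine ⟨l, ?_⟩
      rw [Function.update_of_ne hl]
      exact chain_nu_pos (h1 l) (h2 l))
    ⟨i, by have := chain_nu_pos (h1 i) (h2 i); rw [Function.update_self]; omega⟩

lemma expo_PV (hn : 3 ≤ Fintype.card ι) {i : ι} {k : ℕ} (hk1 : 1 ≤ k) (hk2 : k ≤ ν i) :
    expo h1 h2 (PV h1 h2 hn i k) = Pi.single i k := by
  rw [PV, expo_mkV]
  funext j
  rcases eq_or_ne j i with rfl | hne
  · simp; omega
  · simp [Pi.single_eq_of_ne hne]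

lemma expo_QV (hn : 3 ≤ Fintype.card ι) {i : ι} {t : ℕ} (ht : t < ν i) :
    expo h1 h2 (QV h1 h2 hn i t) = Function.update ν i t := by
  rw [QV, expo_mkV]
  funext j
  rcases eq_or_ne j i with rfl | hne
  · rw [Function.update_self, Function.update_self]; omega
  · simp [Function.update_of_ne hne]

lemma QV_injective (hn : 3 ≤ Fintype.card ι) {i j : ι} {t s : ℕ} (ht : t < ν i) (hs : s < ν j)
    (h : QV h1 h2 hn i t = QV h1 h2 hn j s) : i = j ∧ t = s := by
  rw [vx_eq_iff h1 h2, expo_QV h1 h2 hn ht, expo_QV h1 h2 hn hs] at h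
  rcases eq_or_ne i j with rfl | hne
  · have := congrFun h i
    simp at this
    exact ⟨rfl, this⟩
  · have := congrFun h i
    rw [Function.update_of_ne hne, Function.update_self] at this
    omega

lemma PV_injective (hn : 3 ≤ Fintype.card ι) {i j : ι} {k l : ℕ}
    (hk1 : 1 ≤ k) (hk2 : k ≤ ν i) (hl1 : 1 ≤ l) (hl2 : l ≤ ν j)
    (h : PV h1 h2 hn i k = PV h1 h2 hn j l) : i = j ∧ k = l := by
  rw [vx_eq_iff h1 h2, expo_PV h1 h2 hn hk1 hk2, expo_PV h1 h2 hn hl1 hl2] at h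
  rcases eq_or_ne i j with rfl | hne
  · have := congrFun h i
    simp at this
    exact ⟨rfl, this⟩
  · have := congrFun h i
    rw [Pi.single_eq_of_ne hne, Pi.single_eq_same] at this
    omega

lemma PV_ne_QV (hn : 3 ≤ Fintype.card ι) {i j : ι} {k t : ℕ}
    (hk1 : 1 ≤ k) (hk2 : k ≤ ν i) (ht : t < ν j) :
    PV h1 h2 hn i k ≠ QV h1 h2 hn j t := by
  intro h
  rw [vx_eq_iff h1 h2, expo_PV h1 h2 hn hk1 hk2, expo_QV h1 h2 hn ht] at h
  obtain ⟨l, hli, hlj⟩ := exists_third hn i j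
  have := congrFun h l
  rw [Pi.single_eq_of_ne hli, Function.update_of_ne hlj] at this
  have := chain_nu_pos (h1 l) (h2 l)
  omega

lemma adj_QV_PV (hn : 3 ≤ Fintype.card ι) {i : ι} {t k : ℕ} (ht : t < ν i)
    (hk1 : 1 ≤ k) (hk2 : k ≤ ν i) (h : ν i - k ≤ t) :
    (AG (∀ i, R i)).Adj (QV h1 h2 hn i t) (PV h1 h2 hn i k) := by
  rw [adj_iff h1 h2, expo_QV h1 h2 hn ht, expo_PV h1 h2 hn hk1 hk2]
  constructor
  · intro hcon
    exact PV_ne_QV h1 h2 hn hk1 hk2 ht ((vx_eq_iff h1 h2 _ _).mpr (by rw [expo_QV h1 h2 hn ht,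
      expo_PV h1 h2 hn hk1 hk2, hcon]))
  · intro j
    rcases eq_or_ne j i with rfl | hne
    · rw [Function.update_self, Pi.single_eq_same]; omega
    · rw [Function.update_of_ne hne, Pi.single_eq_of_ne hne]; omega

lemma adj_PV_elim (hn : 3 ≤ Fintype.card ι) {i : ι} {k : ℕ} (hk1 : 1 ≤ k) (hk2 : k ≤ ν i)
    {w : AGVertex (∀ i, R i)} (h : (AG (∀ i, R i)).Adj w (PV h1 h2 hn i k)) :
    ∃ t, t < ν i ∧ ν i - k ≤ t ∧ w = QV h1 h2 hn i t := by
  rw [adj_iff h1 h2, expo_PV h1 h2 hn hk1 hk2] at h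
  obtain ⟨hne, hall⟩ := h
  have hle := expo_le h1 h2 w
  have hup : ∀ j, j ≠ i → expo h1 h2 w j = ν j := by
    intro j hj
    have := hall j
    rw [Pi.single_eq_of_ne hj] at this
    have := hle j
    omega
  set t := expo h1 h2 w i with htdef
  have hti : ν i - k ≤ t := by
    have := hall i
    rw [Pi.single_eq_same] at this
    omega
  have htlt : t < ν i := by
    rcases Nat.lt_or_ge t (ν i) with h' | h'
    · exact h'
    · exfalso
      obtain ⟨l, hl⟩ := expo_lt h1 h2 w
      rcases eq_or_ne l i with rfl | hne'
      · omega
      · rw [hup l hne'] at hl; omega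
  refine ⟨t, htlt, hti, ?_⟩
  rw [vx_eq_iff h1 h2, expo_QV h1 h2 hn htlt]
  funext j
  rcases eq_or_ne j i with rfl | hne'
  · rw [Function.update_self]
  · rw [Function.update_of_ne hne', hup j hne']

lemma not_adj_PV_PV (hn : 3 ≤ Fintype.card ι) {i j : ι} {k l : ℕ}
    (hk1 : 1 ≤ k) (hk2 : k ≤ ν i) (hl1 : 1 ≤ l) (hl2 : l ≤ ν j) :
    ¬ (AG (∀ i, R i)).Adj (PV h1 h2 hn i k) (PV h1 h2 hn j l) := by
  intro h
  rw [adj_iff h1 h2, expo_PV h1 h2 hn hk1 hk2, expo_PV h1 h2 hn hl1 hl2] at h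
  obtain ⟨l', hl'i, hl'j⟩ := exists_third hn i j
  have := h.2 l'
  rw [Pi.single_eq_of_ne hl'i, Pi.single_eq_of_ne hl'j] at this
  have := chain_nu_pos (h1 l') (h2 l')
  omega

lemma adj_QV_QV (hn : 3 ≤ Fintype.card ι) {i j : ι} {t s : ℕ} (ht : t < ν i) (hs : s < ν j)
    (hij : i ≠ j) :
    (AG (∀ i, R i)).Adj (QV h1 h2 hn i t) (QV h1 h2 hn j s) := by
  rw [adj_iff h1 h2, expo_QV h1 h2 hn ht, expo_QV h1 h2 hn hs]
  constructor
  · intro hcon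
    have := congrFun hcon i
    rw [Function.update_of_ne hij] at this
    rw [Function.update_self] at this
    omega
  · intro l
    rcases eq_or_ne l i with rfl | hne
    · rw [Function.update_self, Function.update_of_ne hij]; omega
    · rw [Function.update_of_ne hne]
      rcases eq_or_ne l j with rfl | hne'
      · rw [Function.update_self]; omega
      · rw [Function.update_of_ne hne']; omega

lemma adj_QV_of (hn : 3 ≤ Fintype.card ι) {i : ι} {t : ℕ} (ht : t < ν i)
    {u : AGVertex (∀ i, R i)} (hcov : ν i ≤ t + expo h1 h2 u i) (hne : u ≠ QV h1 h2 hn i t) :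
    (AG (∀ i, R i)).Adj u (QV h1 h2 hn i t) := by
  rw [adj_iff h1 h2, expo_QV h1 h2 hn ht]
  constructor
  · intro hcon
    exact hne ((vx_eq_iff h1 h2 _ _).mpr (by rw [expo_QV h1 h2 hn ht, hcon]))
  · intro j
    rcases eq_or_ne j i with rfl | hne'
    · rw [Function.update_self]; omega
    · rw [Function.update_of_ne hne']
      have := expo_le h1 h2 u j
      omega

lemma reachable_QV (hn : 3 ≤ Fintype.card ι) (u : AGVertex (∀ i, R i)) :
    ∃ i, (AG (∀ i, R i)).Reachable u (QV h1 h2 hn i (ν i - 1)) := by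
  obtain ⟨i, hi⟩ := expo_pos h1 h2 u
  have hν := chain_nu_pos (h1 i) (h2 i)
  refine ⟨i, ?_⟩
  rcases eq_or_ne u (QV h1 h2 hn i (ν i - 1)) with rfl | hne
  · exact SimpleGraph.Reachable.refl _
  · exact (adj_QV_of h1 h2 hn (by omega) (by omega) hne).reachable

lemma reachable_all (hn : 3 ≤ Fintype.card ι) (u v : AGVertex (∀ i, R i)) :
    (AG (∀ i, R i)).Reachable u v := by
  obtain ⟨i, hi⟩ := reachable_QV h1 h2 hn u
  obtain ⟨j, hj⟩ := reachable_QV h1 h2 hn v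
  have hνi := chain_nu_pos (h1 i) (h2 i)
  have hνj := chain_nu_pos (h1 j) (h2 j)
  rcases eq_or_ne i j with rfl | hne
  · exact hi.trans hj.symm
  · exact hi.trans ((adj_QV_QV h1 h2 hn (by omega) (by omega) hne).reachable.trans hj.symm)

lemma AG_dist_ne_zero (hn : 3 ≤ Fintype.card ι) {u v : AGVertex (∀ i, R i)} (h : u ≠ v) :
    (AG (∀ i, R i)).dist u v ≠ 0 := by
  rw [ne_eq, (reachable_all h1 h2 hn u v).dist_eq_zero_iff]
  exact h

lemma dist_PV_two (hn : 3 ≤ Fintype.card ι) {i : ι} {k : ℕ} (hk1 : 1 ≤ k) (hk2 : k ≤ ν i)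
    {w : AGVertex (∀ i, R i)} (hwne : w ≠ PV h1 h2 hn i k)
    (hnadj : ¬ (AG (∀ i, R i)).Adj w (PV h1 h2 hn i k)) (hwi : 1 ≤ expo h1 h2 w i) :
    (AG (∀ i, R i)).dist (PV h1 h2 hn i k) w = 2 := by
  have hν := chain_nu_pos (h1 i) (h2 i)
  set t := ν i - min k (expo h1 h2 w i) with htd
  have ht : t < ν i := by omega
  have hadj1 : (AG (∀ i, R i)).Adj (QV h1 h2 hn i t) (PV h1 h2 hn i k) :=
    adj_QV_PV h1 h2 hn ht hk1 hk2 (by omega)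
  have hwQ : w ≠ QV h1 h2 hn i t := by
    intro hcon
    rw [hcon] at hnadj
    exact hnadj hadj1
  have hadj2 : (AG (∀ i, R i)).Adj w (QV h1 h2 hn i t) :=
    adj_QV_of h1 h2 hn ht (by omega) hwQ
  have hle : (AG (∀ i, R i)).dist (PV h1 h2 hn i k) w ≤ 2 := by
    have := SimpleGraph.dist_le (SimpleGraph.Walk.cons hadj1.symm
      (SimpleGraph.Walk.cons hadj2.symm SimpleGraph.Walk.nil))
    simpa using this
  have h0 : (AG (∀ i, R i)).dist (PV h1 h2 hn i k) w ≠ 0 :=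
    AG_dist_ne_zero h1 h2 hn (Ne.symm hwne)
  have h1' : (AG (∀ i, R i)).dist (PV h1 h2 hn i k) w ≠ 1 := by
    rw [ne_eq, SimpleGraph.dist_eq_one_iff_adj]
    intro hcon
    exact hnadj hcon.symm
  omega

lemma dist_PV_three (hn : 3 ≤ Fintype.card ι) {i : ι} {k : ℕ} (hk1 : 1 ≤ k) (hk2 : k ≤ ν i)
    {w : AGVertex (∀ i, R i)} (hwne : w ≠ PV h1 h2 hn i k)
    (hnadj : ¬ (AG (∀ i, R i)).Adj w (PV h1 h2 hn i k)) (hwi : expo h1 h2 w i = 0) :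
    (AG (∀ i, R i)).dist (PV h1 h2 hn i k) w = 3 := by
  have hν := chain_nu_pos (h1 i) (h2 i)
  -- upper bound: PV i k — QV i (ν i - 1) — QV j (ν j - 1) — w
  obtain ⟨j, hj⟩ := expo_pos h1 h2 w
  have hij : j ≠ i := by
    intro hcon
    rw [hcon] at hj
    omega
  have hνj := chain_nu_pos (h1 j) (h2 j)
  have hadj1 : (AG (∀ i, R i)).Adj (QV h1 h2 hn i (ν i - 1)) (PV h1 h2 hn i k) :=
    adj_QV_PV h1 h2 hn (by omega) hk1 hk2 (by omega)
  have hadj2 : (AG (∀ i, R i)).Adj (QV h1 h2 hn i (ν i - 1)) (QV h1 h2 hn j (ν j - 1)) :=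
    adj_QV_QV h1 h2 hn (by omega) (by omega) (Ne.symm hij)
  have hwQ : w ≠ QV h1 h2 hn j (ν j - 1) := by
    intro hcon
    have := congrFun ((vx_eq_iff h1 h2 _ _).mp hcon) i
    rw [expo_QV h1 h2 hn (by omega), Function.update_of_ne (Ne.symm hij)] at this
    omega
  have hadj3 : (AG (∀ i, R i)).Adj w (QV h1 h2 hn j (ν j - 1)) :=
    adj_QV_of h1 h2 hn (by omega) (by omega) hwQ
  have hle : (AG (∀ i, R i)).dist (PV h1 h2 hn i k) w ≤ 3 := by
    have := SimpleGraph.dist_le (SimpleGraph.Walk.cons hadj1.symm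
      (SimpleGraph.Walk.cons hadj2 (SimpleGraph.Walk.cons hadj3.symm SimpleGraph.Walk.nil)))
    simpa using this
  have h0 : (AG (∀ i, R i)).dist (PV h1 h2 hn i k) w ≠ 0 :=
    AG_dist_ne_zero h1 h2 hn (Ne.symm hwne)
  have h1' : (AG (∀ i, R i)).dist (PV h1 h2 hn i k) w ≠ 1 := by
    rw [ne_eq, SimpleGraph.dist_eq_one_iff_adj]
    intro hcon
    exact hnadj hcon.symm
  have h2' : (AG (∀ i, R i)).dist (PV h1 h2 hn i k) w ≠ 2 := by
    intro hd
    obtain ⟨p, hp⟩ := (reachable_all h1 h2 hn (PV h1 h2 hn i k) w).exists_walk_length_eq_dist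
    rw [hd] at hp
    cases p with
    | nil => simp at hp
    | cons hadj q =>
      cases q with
      | nil => simp at hp
      | cons hadj' q' =>
        cases q' with
        | nil =>
          -- midpoint
          obtain ⟨t, htlt, htge, rfl⟩ := adj_PV_elim h1 h2 hn hk1 hk2 hadj.symm
          have := (adj_iff h1 h2 _ _).mp hadj'
          have hcoord := this.2 i
          rw [expo_QV h1 h2 hn htlt, Function.update_self] at hcoord
          omega
        | cons hadj'' q'' => simp [SimpleGraph.Walk.length_cons] at hp
  omega

noncomputable def WQset (hn : 3 ≤ Fintype.card ι) : Set (AGVertex (∀ i, R i)) :=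
  Set.range (fun p : Σ i : ι, Fin (ν i) => QV h1 h2 hn p.1 p.2.val)

lemma key_resolve (hn : 3 ≤ Fintype.card ι) {u v : AGVertex (∀ i, R i)}
    (hu : u ∉ WQset h1 h2 hn) (hv : v ∉ WQset h1 h2 hn)
    (hd : ∀ w ∈ WQset h1 h2 hn, (AG (∀ i, R i)).dist u w = (AG (∀ i, R i)).dist v w)
    {i : ι} (hi : expo h1 h2 u i < expo h1 h2 v i) : False := by
  have hvle := expo_le h1 h2 v
  have ht : ν i - expo h1 h2 v i < ν i := by
    have := hvle i; omega
  set w := QV h1 h2 hn i (ν i - expo h1 h2 v i) with hw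
  have hmem : w ∈ WQset h1 h2 hn := ⟨⟨i, ⟨ν i - expo h1 h2 v i, ht⟩⟩, rfl⟩
  have hvne : v ≠ w := by
    intro hcon
    rw [hcon] at hv
    exact hv hmem
  have hadj : (AG (∀ i, R i)).Adj v w := by
    apply adj_QV_of h1 h2 hn ht (by have := hvle i; omega) hvne
  have hdist : (AG (∀ i, R i)).dist v w = 1 := SimpleGraph.dist_eq_one_iff_adj.mpr hadj
  have hdu : (AG (∀ i, R i)).dist u w = 1 := by rw [hd w hmem, hdist]
  have hadju : (AG (∀ i, R i)).Adj u w := SimpleGraph.dist_eq_one_iff_adj.mp hdu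
  rw [adj_iff h1 h2] at hadju
  have := hadju.2 i
  rw [expo_QV h1 h2 hn ht, Function.update_self] at this
  have := hvle i
  omega

lemma WQ_resolving (hn : 3 ≤ Fintype.card ι) :
    IsResolving (AG (∀ i, R i)) (WQset h1 h2 hn) := by
  intro u v hd
  by_cases hu : u ∈ WQset h1 h2 hn
  · have h0 := hd u hu
    rw [SimpleGraph.dist_self] at h0
    exact ((reachable_all h1 h2 hn v u).dist_eq_zero_iff.mp h0.symm).symm
  by_cases hv : v ∈ WQset h1 h2 hn
  · have h0 := hd v hv
    rw [SimpleGraph.dist_self] at h0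
    exact (reachable_all h1 h2 hn u v).dist_eq_zero_iff.mp h0
  by_contra hne
  have hexp : expo h1 h2 u ≠ expo h1 h2 v := fun h => hne ((vx_eq_iff h1 h2 u v).mpr h)
  obtain ⟨i, hi⟩ := Function.ne_iff.mp hexp
  rcases Nat.lt_or_ge (expo h1 h2 u i) (expo h1 h2 v i) with h' | h'
  · exact key_resolve h1 h2 hn hu hv hd h'
  · have h'' : expo h1 h2 v i < expo h1 h2 u i := by omega
    exact key_resolve h1 h2 hn hv hu (fun w hw => (hd w hw).symm) h''

lemma WQ_ncard (hn : 3 ≤ Fintype.card ι) : (WQset h1 h2 hn).ncard = ∑ i, ν i := by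
  have hinj : Function.Injective (fun p : Σ i : ι, Fin (ν i) => QV h1 h2 hn p.1 p.2.val) := by
    rintro ⟨i, t⟩ ⟨j, s⟩ h
    obtain ⟨rfl, h2'⟩ := QV_injective h1 h2 hn t.2 s.2 h
    have : t = s := Fin.ext h2'
    rw [this]
  rw [WQset, ← Set.image_univ, Set.ncard_image_of_injective _ hinj, Set.ncard_univ,
    Nat.card_eq_fintype_card, Fintype.card_sigma]
  simp

lemma metricDim_le (hn : 3 ≤ Fintype.card ι) : metricDim (AG (∀ i, R i)) ≤ ∑ i, ν i :=
  Nat.sInf_le ⟨WQset h1 h2 hn, WQ_resolving h1 h2 hn, Set.finite_range _, WQ_ncard h1 h2 hn⟩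

open Classical in
lemma claim1 (hn : 3 ≤ Fintype.card ι) {W : Set (AGVertex (∀ i, R i))}
    (hres : IsResolving (AG (∀ i, R i)) W) (i : ι) :
    ν i ≤ ((Finset.Icc 1 (ν i)).filter (fun k => PV h1 h2 hn i k ∈ W)).card
      + ((Finset.range (ν i)).filter (fun t => QV h1 h2 hn i t ∈ W)).card + 1 := by
  classical
  set D := (Finset.range (ν i)).filter (fun t => QV h1 h2 hn i t ∈ W) with hD
  set A := (Finset.Icc 1 (ν i)).filter (fun k => PV h1 h2 hn i k ∉ W) with hA
  set patt : ℕ → Finset ℕ := fun k => D.filter (fun t => ν i - k ≤ t) with hpatt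
  set κ : ℕ → ℕ := fun k => if h : (patt k).Nonempty then (patt k).min' h + 1 else 0 with hκ
  -- pattern equality implies vertex equality
  have hkey : ∀ k ∈ A, ∀ k' ∈ A, patt k = patt k' → k = k' := by
    intro k hk k' hk' hpe
    rw [hA, Finset.mem_filter, Finset.mem_Icc] at hk hk'
    obtain ⟨⟨hk1, hk2⟩, hkW⟩ := hk
    obtain ⟨⟨hk1', hk2'⟩, hkW'⟩ := hk'
    have hdists : ∀ w ∈ W, (AG (∀ i, R i)).dist (PV h1 h2 hn i k) w
        = (AG (∀ i, R i)).dist (PV h1 h2 hn i k') w := by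
      intro w hw
      have hwk : w ≠ PV h1 h2 hn i k := fun hcon => hkW (hcon ▸ hw)
      have hwk' : w ≠ PV h1 h2 hn i k' := fun hcon => hkW' (hcon ▸ hw)
      by_cases hadj : (AG (∀ i, R i)).Adj w (PV h1 h2 hn i k)
      · obtain ⟨t, htlt, htge, rfl⟩ := adj_PV_elim h1 h2 hn hk1 hk2 hadj
        have htD : t ∈ D := by
          rw [hD, Finset.mem_filter, Finset.mem_range]
          exact ⟨htlt, hw⟩
        have htp : t ∈ patt k := by
          rw [hpatt]; simp only [Finset.mem_filter]
          exact ⟨htD, htge⟩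
        rw [hpe] at htp
        have htge' : ν i - k' ≤ t := (Finset.mem_filter.mp htp).2
        have hadj' := adj_QV_PV h1 h2 hn htlt hk1' hk2' htge'
        rw [SimpleGraph.dist_eq_one_iff_adj.mpr hadj.symm,
          SimpleGraph.dist_eq_one_iff_adj.mpr hadj'.symm]
      · have hadj' : ¬ (AG (∀ i, R i)).Adj w (PV h1 h2 hn i k') := by
          intro hcon
          obtain ⟨t, htlt, htge, rfl⟩ := adj_PV_elim h1 h2 hn hk1' hk2' hcon
          have htp : t ∈ patt k' := by
            rw [hpatt]; simp only [Finset.mem_filter]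
            refine ⟨?_, htge⟩
            rw [hD, Finset.mem_filter, Finset.mem_range]
            exact ⟨htlt, hw⟩
          rw [← hpe] at htp
          exact hadj (adj_QV_PV h1 h2 hn htlt hk1 hk2 (Finset.mem_filter.mp htp).2)
        by_cases hwi : 1 ≤ expo h1 h2 w i
        · rw [dist_PV_two h1 h2 hn hk1 hk2 hwk hadj hwi,
            dist_PV_two h1 h2 hn hk1' hk2' hwk' hadj' hwi]
        · have hwi0 : expo h1 h2 w i = 0 := by omega
          rw [dist_PV_three h1 h2 hn hk1 hk2 hwk hadj hwi0,
            dist_PV_three h1 h2 hn hk1' hk2' hwk' hadj' hwi0]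
    have := hres _ _ hdists
    exact (PV_injective h1 h2 hn hk1 hk2 hk1' hk2' this).2
  -- κ injective on A
  have hinj : Set.InjOn κ A := by
    intro k hk k' hk' hkk
    apply hkey k hk k' hk'
    rw [hκ] at hkk
    simp only at hkk
    by_cases h : (patt k).Nonempty
    · by_cases h' : (patt k').Nonempty
      · rw [dif_pos h, dif_pos h'] at hkk
        have hmm : (patt k).min' h = (patt k').min' h' := by omega
        -- patterns are up-sets in D with equal min: equal
        ext t
        simp only [hpatt, Finset.mem_filter]
        constructor
        · rintro ⟨htD, hts⟩
          refine ⟨htD, ?_⟩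
          have h1t : (patt k).min' h ≤ t := Finset.min'_le _ t (by
            simp only [hpatt, Finset.mem_filter]; exact ⟨htD, hts⟩)
          have h2t : ν i - k' ≤ (patt k').min' h' :=
            (Finset.mem_filter.mp (Finset.min'_mem (patt k') h')).2
          omega
        · rintro ⟨htD, hts⟩
          refine ⟨htD, ?_⟩
          have h1t : (patt k').min' h' ≤ t := Finset.min'_le _ t (by
            simp only [hpatt, Finset.mem_filter]; exact ⟨htD, hts⟩)
          have h2t : ν i - k ≤ (patt k).min' h :=
            (Finset.mem_filter.mp (Finset.min'_mem (patt k) h)).2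
          omega
      · rw [dif_pos h, dif_neg h'] at hkk
        omega
    · by_cases h' : (patt k').Nonempty
      · rw [dif_neg h, dif_pos h'] at hkk
        omega
      · rw [Finset.not_nonempty_iff_eq_empty] at h h'
        rw [h, h']
  -- κ maps A into insert 0 (D.image (·+1))
  have hmaps : ∀ k ∈ A, κ k ∈ insert 0 (D.image (· + 1)) := by
    intro k hk
    rw [hκ]
    simp only
    by_cases h : (patt k).Nonempty
    · rw [dif_pos h]
      apply Finset.mem_insert_of_mem
      rw [Finset.mem_image]
      refine ⟨(patt k).min' h, ?_, rfl⟩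
      have := Finset.min'_mem (patt k) h
      exact Finset.filter_subset _ D this
    · rw [dif_neg h]
      exact Finset.mem_insert_self _ _
  have hcard1 : A.card ≤ D.card + 1 := by
    calc A.card ≤ (insert 0 (D.image (· + 1))).card :=
          Finset.card_le_card_of_injOn κ hmaps hinj
      _ ≤ (D.image (· + 1)).card + 1 := Finset.card_insert_le _ _
      _ ≤ D.card + 1 := by
          have := Finset.card_image_le (s := D) (f := (· + 1))
          omega
  have hsplit : ((Finset.Icc 1 (ν i)).filter (fun k => PV h1 h2 hn i k ∈ W)).card + A.card
      = ν i := by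
    rw [hA, Finset.card_filter_add_card_filter_not, Nat.card_Icc]
    omega
  omega

omit h1 h2 in
lemma add_pow_le' (k b : ℕ) : k + 2 ^ b ≤ 2 ^ (k + b) := by
  induction k with
  | zero => simp
  | succ n ih =>
    have h2 : 1 ≤ 2 ^ (n + b) := Nat.one_le_two_pow
    have : 2 ^ (n + 1 + b) = 2 ^ (n + b) + 2 ^ (n + b) := by
      rw [show n + 1 + b = (n + b) + 1 by omega, pow_succ]
      omega
    omega

open Classical in
lemma lower_main (hn : 3 ≤ Fintype.card ι) {W : Set (AGVertex (∀ i, R i))}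
    (hres : IsResolving (AG (∀ i, R i)) W) (hfin : W.Finite) :
    (∑ i, ν i) - Fintype.card ι +
      (if (Finset.univ.filter fun i => ν i = 1).card = 0 then 0
        else Nat.clog 2 (Finset.univ.filter fun i => ν i = 1).card) ≤ W.ncard := by
  classical
  set W' := hfin.toFinset with hW'
  have hWcard : W.ncard = W'.card := Set.ncard_eq_toFinset_card W hfin
  set PS : ι → Finset (AGVertex (∀ i, R i)) :=
    fun i => (Finset.Icc 1 (ν i)).image (PV h1 h2 hn i) with hPS
  set QS : ι → Finset (AGVertex (∀ i, R i)) :=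
    fun i => (Finset.range (ν i)).image (QV h1 h2 hn i) with hQS
  set Ai : ι → Finset (AGVertex (∀ i, R i)) := fun i => (PS i ∪ QS i) ∩ W' with hAi
  have hPmem : ∀ {i : ι} {v}, v ∈ PS i ↔ ∃ k, (1 ≤ k ∧ k ≤ ν i) ∧ PV h1 h2 hn i k = v := by
    intro i v
    rw [hPS]
    simp [Finset.mem_image, Finset.mem_Icc]
  have hQmem : ∀ {i : ι} {v}, v ∈ QS i ↔ ∃ t, t < ν i ∧ QV h1 h2 hn i t = v := by
    intro i v
    rw [hQS]
    simp [Finset.mem_image, Finset.mem_range]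
  -- disjointness of the Ai
  have hAdisj : ∀ i j : ι, i ≠ j → Disjoint (Ai i) (Ai j) := by
    intro i j hij
    rw [Finset.disjoint_left]
    intro v hvi hvj
    rw [hAi] at hvi hvj
    have hvi' := (Finset.mem_inter.mp hvi).1
    have hvj' := (Finset.mem_inter.mp hvj).1
    rcases Finset.mem_union.mp hvi' with hp | hq
    · obtain ⟨k, ⟨hk1, hk2⟩, hkv⟩ := hPmem.mp hp
      rcases Finset.mem_union.mp hvj' with hp' | hq'
      · obtain ⟨l, ⟨hl1, hl2⟩, hlv⟩ := hPmem.mp hp'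
        exact hij (PV_injective h1 h2 hn hk1 hk2 hl1 hl2 (hkv.trans hlv.symm)).1
      · obtain ⟨t, ht, htv⟩ := hQmem.mp hq'
        exact PV_ne_QV h1 h2 hn hk1 hk2 ht (hkv.trans htv.symm)
    · obtain ⟨t, ht, htv⟩ := hQmem.mp hq
      rcases Finset.mem_union.mp hvj' with hp' | hq'
      · obtain ⟨l, ⟨hl1, hl2⟩, hlv⟩ := hPmem.mp hp'
        exact PV_ne_QV h1 h2 hn hl1 hl2 ht (hlv.trans htv.symm)
      · obtain ⟨s, hs, hsv⟩ := hQmem.mp hq'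
        exact hij (QV_injective h1 h2 hn ht hs (htv.trans hsv.symm)).1
  -- lower bound on each Ai
  have hAcard : ∀ i : ι, ν i - 1 ≤ (Ai i).card := by
    intro i
    have hclaim := claim1 h1 h2 hn hres i
    set pf := (Finset.Icc 1 (ν i)).filter (fun k => PV h1 h2 hn i k ∈ W) with hpf
    set qf := (Finset.range (ν i)).filter (fun t => QV h1 h2 hn i t ∈ W) with hqf
    have hpc : (pf.image (PV h1 h2 hn i)).card = pf.card := by
      apply Finset.card_image_of_injOn
      intro a ha b hb hab
      rw [hpf, Finset.coe_filter] at ha hb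
      simp only [Set.mem_setOf_eq, Finset.mem_Icc] at ha hb
      exact (PV_injective h1 h2 hn ha.1.1 ha.1.2 hb.1.1 hb.1.2 hab).2
    have hqc : (qf.image (QV h1 h2 hn i)).card = qf.card := by
      apply Finset.card_image_of_injOn
      intro a ha b hb hab
      rw [hqf, Finset.coe_filter] at ha hb
      simp only [Set.mem_setOf_eq, Finset.mem_range] at ha hb
      exact (QV_injective h1 h2 hn ha.1 hb.1 hab).2
    have hdisj2 : Disjoint (pf.image (PV h1 h2 hn i)) (qf.image (QV h1 h2 hn i)) := by
      rw [Finset.disjoint_left]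
      rintro v hv hv'
      obtain ⟨k, hk, hkv⟩ := Finset.mem_image.mp hv
      obtain ⟨t, ht, htv⟩ := Finset.mem_image.mp hv'
      rw [hpf, Finset.mem_filter, Finset.mem_Icc] at hk
      rw [hqf, Finset.mem_filter, Finset.mem_range] at ht
      exact PV_ne_QV h1 h2 hn hk.1.1 hk.1.2 ht.1 (hkv.trans htv.symm)
    have hsub : pf.image (PV h1 h2 hn i) ∪ qf.image (QV h1 h2 hn i) ⊆ Ai i := by
      intro v hv
      rw [hAi, Finset.mem_inter]
      rcases Finset.mem_union.mp hv with hv' | hv'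
      · obtain ⟨k, hk, hkv⟩ := Finset.mem_image.mp hv'
        rw [hpf, Finset.mem_filter] at hk
        constructor
        · apply Finset.mem_union_left
          rw [hPS]
          exact Finset.mem_image.mpr ⟨k, hk.1, hkv⟩
        · rw [Set.Finite.mem_toFinset]
          rw [← hkv]
          exact hk.2
      · obtain ⟨t, ht, htv⟩ := Finset.mem_image.mp hv'
        rw [hqf, Finset.mem_filter] at ht
        constructor
        · apply Finset.mem_union_right
          rw [hQS]
          exact Finset.mem_image.mpr ⟨t, ht.1, htv⟩
        · rw [Set.Finite.mem_toFinset]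
          rw [← htv]
          exact ht.2
    have hle : pf.card + qf.card ≤ (Ai i).card := by
      calc pf.card + qf.card
          = (pf.image (PV h1 h2 hn i)).card + (qf.image (QV h1 h2 hn i)).card := by
            rw [hpc, hqc]
        _ = (pf.image (PV h1 h2 hn i) ∪ qf.image (QV h1 h2 hn i)).card :=
            (Finset.card_union_of_disjoint hdisj2).symm
        _ ≤ (Ai i).card := Finset.card_le_card hsub
    omega
  -- global partition
  set U := Finset.univ.biUnion Ai with hU
  have hUcard : U.card = ∑ i, (Ai i).card :=
    Finset.card_biUnion (fun x _ y _ hxy => hAdisj x y hxy)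
  have hUW : U ⊆ W' := by
    intro v hv
    obtain ⟨i, _, hvi⟩ := Finset.mem_biUnion.mp hv
    exact (Finset.mem_inter.mp hvi).2
  set B := W' \ U with hB
  have htotal : B.card + U.card = W'.card := Finset.card_sdiff_add_card_eq_card hUW
  -- fields
  set Fd := Finset.univ.filter (fun i => ν i = 1) with hFd
  set FF := Fd.filter (fun i => Ai i = ∅) with hFF
  -- injectivity of supports over B for free fields
  have hFF2 : FF.card ≤ 2 ^ B.card := by
    set g : ι → Finset (AGVertex (∀ i, R i)) :=
      fun i => B.filter (fun w => 1 ≤ expo h1 h2 w i) with hg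
    have hmaps : ∀ i ∈ FF, g i ∈ B.powerset := by
      intro i _
      rw [Finset.mem_powerset, hg]
      exact Finset.filter_subset _ _
    have hinj : Set.InjOn g FF := by
      intro i hi i' hi' hgg
      by_contra hne
      rw [Finset.mem_coe, hFF, Finset.mem_filter, hFd, Finset.mem_filter] at hi hi'
      obtain ⟨⟨-, hνi⟩, hAie⟩ := hi
      obtain ⟨⟨-, hνi'⟩, hAie'⟩ := hi'
      have hPnW : ∀ j : ι, ν j = 1 → Ai j = ∅ → PV h1 h2 hn j 1 ∉ W := by
        intro j hνj hAje hmem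
        have : PV h1 h2 hn j 1 ∈ Ai j := by
          rw [hAi, Finset.mem_inter]
          constructor
          · exact Finset.mem_union_left _ (hPmem.mpr ⟨1, ⟨le_rfl, by omega⟩, rfl⟩)
          · rw [Set.Finite.mem_toFinset]; exact hmem
        rw [hAje] at this
        exact absurd this (Finset.notMem_empty _)
      have hQnW : ∀ j : ι, ν j = 1 → Ai j = ∅ → ∀ t, t < ν j → QV h1 h2 hn j t ∉ W := by
        intro j hνj hAje t ht hmem
        have : QV h1 h2 hn j t ∈ Ai j := by
          rw [hAi, Finset.mem_inter]
          constructor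
          · exact Finset.mem_union_right _ (hQmem.mpr ⟨t, ht, rfl⟩)
          · rw [Set.Finite.mem_toFinset]; exact hmem
        rw [hAje] at this
        exact absurd this (Finset.notMem_empty _)
      have hdists : ∀ w ∈ W, (AG (∀ i, R i)).dist (PV h1 h2 hn i 1) w
          = (AG (∀ i, R i)).dist (PV h1 h2 hn i' 1) w := by
        intro w hw
        have hw' : w ∈ W' := Set.Finite.mem_toFinset hfin |>.mpr hw
        have hwp : w ≠ PV h1 h2 hn i 1 := by
          intro hcon; exact hPnW i hνi hAie (hcon ▸ hw)
        have hwp' : w ≠ PV h1 h2 hn i' 1 := by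
          intro hcon; exact hPnW i' hνi' hAie' (hcon ▸ hw)
        have hnadj : ¬ (AG (∀ i, R i)).Adj w (PV h1 h2 hn i 1) := by
          intro hcon
          obtain ⟨t, htlt, -, rfl⟩ := adj_PV_elim h1 h2 hn le_rfl (by omega) hcon
          exact hQnW i hνi hAie t htlt hw
        have hnadj' : ¬ (AG (∀ i, R i)).Adj w (PV h1 h2 hn i' 1) := by
          intro hcon
          obtain ⟨t, htlt, -, rfl⟩ := adj_PV_elim h1 h2 hn le_rfl (by omega) hcon
          exact hQnW i' hνi' hAie' t htlt hw
        have hiff : (1 ≤ expo h1 h2 w i) ↔ (1 ≤ expo h1 h2 w i') := by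
          by_cases hwB : w ∈ B
          · have h1' : w ∈ g i ↔ w ∈ g i' := by rw [hgg]
            rw [hg] at h1'
            simp only [Finset.mem_filter] at h1'
            constructor
            · intro h; exact (h1'.mp ⟨hwB, h⟩).2
            · intro h; exact (h1'.mpr ⟨hwB, h⟩).2
          · have hwU : w ∈ U := by
              by_contra hcon
              exact hwB (Finset.mem_sdiff.mpr ⟨hw', hcon⟩)
            obtain ⟨j, -, hwj⟩ := Finset.mem_biUnion.mp hwU
            have hji : j ≠ i := by
              intro hcon
              rw [hcon, hAie] at hwj
              exact absurd hwj (Finset.notMem_empty _)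
            have hji' : j ≠ i' := by
              intro hcon
              rw [hcon, hAie'] at hwj
              exact absurd hwj (Finset.notMem_empty _)
            have hwj' := (Finset.mem_inter.mp hwj).1
            rcases Finset.mem_union.mp hwj' with hp | hq
            · obtain ⟨k, ⟨hk1, hk2⟩, hkv⟩ := hPmem.mp hp
              have he : expo h1 h2 w = Pi.single j k := by
                rw [← hkv, expo_PV h1 h2 hn hk1 hk2]
              rw [he, Pi.single_eq_of_ne (Ne.symm hji), Pi.single_eq_of_ne (Ne.symm hji')]
            · obtain ⟨t, ht, htv⟩ := hQmem.mp hq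
              have he : expo h1 h2 w = Function.update ν j t := by
                rw [← htv, expo_QV h1 h2 hn ht]
              rw [he, Function.update_of_ne (Ne.symm hji), Function.update_of_ne (Ne.symm hji')]
              exact ⟨fun _ => chain_nu_pos (h1 i') (h2 i'), fun _ => chain_nu_pos (h1 i) (h2 i)⟩
        by_cases hwi : 1 ≤ expo h1 h2 w i
        · rw [dist_PV_two h1 h2 hn le_rfl (by omega) hwp hnadj hwi,
            dist_PV_two h1 h2 hn le_rfl (by omega) hwp' hnadj' (hiff.mp hwi)]
        · have hz : expo h1 h2 w i = 0 := by omega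
          have hz' : expo h1 h2 w i' = 0 := by
            by_contra hcon
            exact hwi (hiff.mpr (by omega))
          rw [dist_PV_three h1 h2 hn le_rfl (by omega) hwp hnadj hz,
            dist_PV_three h1 h2 hn le_rfl (by omega) hwp' hnadj' hz']
      have := hres _ _ hdists
      exact hne (PV_injective h1 h2 hn le_rfl (by omega) le_rfl (by omega) this).1
    calc FF.card ≤ B.powerset.card := Finset.card_le_card_of_injOn g hmaps hinj
      _ = 2 ^ B.card := Finset.card_powerset B
  -- count of fields
  have hFdle : Fd.card ≤ FF.card + ∑ i ∈ Fd, (Ai i).card := by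
    have hsubFF : FF ⊆ Fd := Finset.filter_subset _ _
    have h1' : (Fd \ FF).card + FF.card = Fd.card := Finset.card_sdiff_add_card_eq_card hsubFF
    have h2' : (Fd \ FF).card ≤ ∑ i ∈ Fd \ FF, (Ai i).card := by
      rw [Finset.card_eq_sum_ones]
      apply Finset.sum_le_sum
      intro i hi
      rw [Finset.mem_sdiff] at hi
      have hine : Ai i ≠ ∅ := by
        intro h
        exact hi.2 (by rw [hFF]; exact Finset.mem_filter.mpr ⟨hi.1, h⟩)
      exact Finset.card_pos.mpr (Finset.nonempty_iff_ne_empty.mpr hine)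
    have h3' : ∑ i ∈ Fd \ FF, (Ai i).card ≤ ∑ i ∈ Fd, (Ai i).card :=
      Finset.sum_le_sum_of_subset (Finset.sdiff_subset)
    omega
  -- sums split
  have hsplit : ∑ i, (Ai i).card = (∑ i ∈ Fd, (Ai i).card) + ∑ i ∈ Finset.univ.filter
      (fun i => ¬ ν i = 1), (Ai i).card := by
    rw [hFd]
    exact (Finset.sum_filter_add_sum_filter_not _ _ _).symm
  have hnf : ∑ i, (ν i - 1) ≤ ∑ i ∈ Finset.univ.filter (fun i => ¬ ν i = 1), (Ai i).card := by
    have e1 : ∑ i, (ν i - 1) = (∑ i ∈ Fd, (ν i - 1)) + ∑ i ∈ Finset.univ.filter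
        (fun i => ¬ ν i = 1), (ν i - 1) := by
      rw [hFd]
      exact (Finset.sum_filter_add_sum_filter_not _ _ _).symm
    have e2 : ∑ i ∈ Fd, (ν i - 1) = 0 := by
      apply Finset.sum_eq_zero
      intro i hi
      rw [hFd, Finset.mem_filter] at hi
      omega
    have e3 : ∑ i ∈ Finset.univ.filter (fun i => ¬ ν i = 1), (ν i - 1)
        ≤ ∑ i ∈ Finset.univ.filter (fun i => ¬ ν i = 1), (Ai i).card :=
      Finset.sum_le_sum (fun i _ => hAcard i)
    omega
  have hsumnu : ∑ i, ν i = (∑ i, (ν i - 1)) + Fintype.card ι := by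
    rw [← Finset.card_univ, Finset.card_eq_sum_ones, ← Finset.sum_add_distrib]
    apply Finset.sum_congr rfl
    intro i _
    have := chain_nu_pos (h1 i) (h2 i)
    omega
  rw [hWcard]
  by_cases hβ : Fd.card = 0
  · rw [hFd] at hβ
    rw [hβ]
    norm_num
    have : ∑ i, (ν i - 1) ≤ W'.card := by
      have := hsplit
      omega
    omega
  · rw [hFd] at hβ
    rw [if_neg hβ]
    have hclog : Nat.clog 2 Fd.card ≤ (∑ i ∈ Fd, (Ai i).card) + B.card := by
      rw [Nat.clog_le_iff_le_pow (by omega)]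
      calc Fd.card ≤ FF.card + ∑ i ∈ Fd, (Ai i).card := hFdle
        _ ≤ 2 ^ B.card + ∑ i ∈ Fd, (Ai i).card := by omega
        _ ≤ 2 ^ ((∑ i ∈ Fd, (Ai i).card) + B.card) := by
            have := add_pow_le' (∑ i ∈ Fd, (Ai i).card) B.card
            omega
    have hFdeq : (Finset.univ.filter fun i => ν i = 1).card = Fd.card := by rw [hFd]
    rw [hFdeq]
    omega

end Tup

open Classical in
theorem stmt14 (ι : Type*) [Fintype ι] [DecidableEq ι] (R : ι → Type*)
    [∀ i, CommRing (R i)] [∀ i, Finite (R i)] [∀ i, IsLocalRing (R i)]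
    [∀ i, IsPrincipalIdealRing (R i)]
    (ν : ι → ℕ) (h1 : ∀ i, (maximalIdeal (R i)) ^ (ν i) = ⊥)
    (h2 : ∀ i, (maximalIdeal (R i)) ^ (ν i - 1) ≠ ⊥) (hn : 3 ≤ Fintype.card ι) :
    (∑ i, ν i) - Fintype.card ι +
      (if (Finset.univ.filter fun i => IsField (R i)).card = 0 then 0
        else Nat.clog 2 (Finset.univ.filter fun i => IsField (R i)).card)
      ≤ metricDim (AG (∀ i, R i)) ∧
    metricDim (AG (∀ i, R i)) ≤ ∑ i, ν i := by
  classical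
  have hfe : (Finset.univ.filter fun i => IsField (R i))
      = (Finset.univ.filter fun i => ν i = 1) := by
    ext i
    simp only [Finset.mem_filter, Finset.mem_univ, true_and]
    exact chain_isField_iff (h1 i) (h2 i)
  constructor
  · rw [hfe]
    have hSne : {n | ∃ W : Set (AGVertex (∀ i, R i)),
        IsResolving (AG (∀ i, R i)) W ∧ W.Finite ∧ W.ncard = n}.Nonempty :=
      ⟨∑ i, ν i, WQset h1 h2 hn, WQ_resolving h1 h2 hn, Set.finite_range _, WQ_ncard h1 h2 hn⟩
    obtain ⟨W₀, hres₀, hfin₀, hcard₀⟩ := Nat.sInf_mem hSne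
    have hlow := lower_main h1 h2 hn hres₀ hfin₀
    rw [hcard₀] at hlow
    exact hlow
  · exact metricDim_le h1 h2 hn
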